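/- Let f be a symmetric norm on ℝ^n and let ‖·‖_f be the induced unitarily invariant norm on B(H). Then there exists a nonempty compact set S ⊆ ℝ^n such that every c = (c_1, …, c_n) ∈ S satisfies c_1 ≥ c_2 ≥ … ≥ c_n ≥ 0, and for every A ∈ B(H) one has ‖A‖_f = max_{c ∈ S} Σ_{j=1}^n c_j s_j(A), the maximum being attained. -/

import Mathlib

open scoped InnerProductSpace

variable {H : Type*} [NormedAddCommGroup H] [InnerProductSpace ℂ H] [CompleteSpace H]

/-- The `k`-th singular value (1-indexed) of a bounded operator `A`:
`s_k(A) = inf {‖A - X‖ : rank X < k}`. -/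
noncomputable def sval (k : ℕ) (A : H →L[ℂ] H) : ℝ :=
  sInf { r : ℝ | ∃ X : H →L[ℂ] H,
    Module.rank ℂ (LinearMap.range (X : H →ₗ[ℂ] H)) < (k : Cardinal) ∧ r = ‖A - X‖ }

/-- `f : ℝ^n → ℝ` is a symmetric norm: a norm invariant under permutations of the
coordinates and under sign changes of the coordinates. -/
structure IsSymmetricNorm (n : ℕ) (f : (Fin n → ℝ) → ℝ) : Prop where
  triangle : ∀ x y, f (x + y) ≤ f x + f y
  homog : ∀ (t : ℝ) (x), f (t • x) = |t| * f x
  definite : ∀ x, x ≠ 0 → 0 < f x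
  perm_invariant : ∀ (σ : Equiv.Perm (Fin n)) (x), f (fun i => x (σ i)) = f x
  sign_invariant : ∀ (ε : Fin n → ℝ), (∀ i, ε i = 1 ∨ ε i = -1) →
    ∀ x, f (fun i => ε i * x i) = f x

/-- The unitarily invariant norm induced by a symmetric norm `f` on `ℝ^n`:
`‖A‖_f = f (s_1(A), …, s_n(A))`. -/
noncomputable def normf (n : ℕ) (f : (Fin n → ℝ) → ℝ) (A : H →L[ℂ] H) : ℝ :=
  f (fun j : Fin n => sval (j.1 + 1) A)

/-!
For a nonincreasing nonnegative vector `x`, Hahn–Banach gives coefficients `c` with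
`c ⬝ᵥ x = f x` and `c ⬝ᵥ y ≤ f y` for all `y`. By the symmetries of `f`, the decreasing
rearrangement `d` of `|c|` still satisfies `d ⬝ᵥ y ≤ f y` for all `y`, and by the rearrangement
inequality `f x = c ⬝ᵥ x ≤ |c| ⬝ᵥ x ≤ d ⬝ᵥ x`. Hence `f x` is the maximum of `d ⬝ᵥ x` over the
compact set of nonincreasing nonnegative `d` in the dual unit ball of `f`; the singular values
of an operator form such a vector `x`.
-/

open Finset

section SingularValues

omit [CompleteSpace H]

lemma sval_nonneg (k : ℕ) (A : H →L[ℂ] H) : 0 ≤ sval k A :=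
  Real.sInf_nonneg <| by
    rintro r ⟨X, -, rfl⟩
    positivity

lemma sval_le_sval {k l : ℕ} (hk : 0 < k) (hkl : k ≤ l) (A : H →L[ℂ] H) :
    sval l A ≤ sval k A := by
  refine csInf_le_csInf ⟨0, ?_⟩ ⟨‖A - 0‖, 0, ?_, rfl⟩ ?_
  · rintro r ⟨X, -, rfl⟩
    positivity
  · simpa using hk
  · rintro r ⟨X, hX, rfl⟩
    exact ⟨X, hX.trans_le (by exact_mod_cast hkl), rfl⟩

lemma antitone_sval (n : ℕ) (A : H →L[ℂ] H) : Antitone fun j : Fin n => sval (j.1 + 1) A :=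
  fun _ _ hij => sval_le_sval (Nat.succ_pos _) (Nat.succ_le_succ hij) A

end SingularValues

theorem exists_linearMap_eq_and_le {E : Type*} [AddCommGroup E] [Module ℝ E] (p : E → ℝ)
    (hadd : ∀ x y, p (x + y) ≤ p x + p y) (hsmul : ∀ (t : ℝ) x, p (t • x) = |t| * p x)
    (x : E) : ∃ g : E →ₗ[ℝ] ℝ, g x = p x ∧ ∀ y, g y ≤ p y := by
  have hp0 : p 0 = 0 := by simpa using hsmul 0 0
  have hpx : 0 ≤ p x := by
    have := hadd x (-x)
    rw [add_neg_cancel, hp0, ← neg_one_smul ℝ x, hsmul] at this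
    norm_num at this
    linarith
  let g₀ : E →ₗ.[ℝ] ℝ := LinearPMap.mkSpanSingleton' x (p x) fun c hc => by
    rcases smul_eq_zero.1 hc with rfl | rfl
    · simp
    · simp [hp0]
  obtain ⟨g, hg₀, hg⟩ := exists_extension_of_le_sublinear g₀ p
    (fun c hc y => by rw [hsmul, abs_of_pos hc]) hadd <| by
      rintro ⟨_, hv⟩
      obtain ⟨c, rfl⟩ := Submodule.mem_span_singleton.1 hv
      rw [LinearPMap.mkSpanSingleton'_apply, hsmul, smul_eq_mul]
      exact mul_le_mul_of_nonneg_right (le_abs_self c) hpx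
  exact ⟨g, (hg₀ ⟨x, Submodule.mem_span_singleton_self x⟩).trans
    (LinearPMap.mkSpanSingleton'_apply_self _ _ _ _), hg⟩

theorem exists_dotProduct_eq_and_le {ι : Type*} [Fintype ι] [DecidableEq ι] (p : (ι → ℝ) → ℝ)
    (hadd : ∀ x y, p (x + y) ≤ p x + p y) (hsmul : ∀ (t : ℝ) x, p (t • x) = |t| * p x)
    (x : ι → ℝ) : ∃ c : ι → ℝ, c ⬝ᵥ x = p x ∧ ∀ y, c ⬝ᵥ y ≤ p y := by
  obtain ⟨g, hgx, hg⟩ := exists_linearMap_eq_and_le p hadd hsmul x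
  have hg_apply : ∀ y, g y = (fun i => g fun j => if i = j then 1 else 0) ⬝ᵥ y := fun y => by
    simpa [dotProduct, mul_comm] using LinearMap.pi_apply_eq_sum_univ g y
  exact ⟨_, (hg_apply x).symm.trans hgx, fun y => (hg_apply y).symm.trans_le (hg y)⟩

lemma exists_antitone_comp_perm {α : Type*} [LinearOrder α] {n : ℕ} (a : Fin n → α) :
    ∃ σ : Equiv.Perm (Fin n), Antitone (a ∘ σ) :=
  ⟨Fin.revPerm.trans (Tuple.sort a), fun _ _ hij =>
    Tuple.monotone_sort a (Fin.rev_le_rev.2 hij)⟩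

def antitoneDualBall {n : ℕ} (f : (Fin n → ℝ) → ℝ) : Set (Fin n → ℝ) :=
  {c | Antitone c ∧ 0 ≤ c ∧ ∀ y, c ⬝ᵥ y ≤ f y}

lemma isCompact_antitoneDualBall {n : ℕ} (f : (Fin n → ℝ) → ℝ) :
    IsCompact (antitoneDualBall f) := by
  have hclosed : IsClosed (antitoneDualBall f) := by
    have : antitoneDualBall f = {c | Antitone c} ∩ Set.Ici 0 ∩ ⋂ y, {c | c ⬝ᵥ y ≤ f y} := by
      ext; simp [antitoneDualBall, and_assoc]
    rw [this]
    exact (isClosed_antitone.inter isClosed_Ici).inter <| isClosed_iInter fun y =>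
      isClosed_le (continuous_id.dotProduct continuous_const) continuous_const
  refine (isCompact_Icc (a := 0) (b := fun _ => f 1)).of_isClosed_subset hclosed
    fun c ⟨_, hc0, hcf⟩ => ⟨hc0, fun i => ?_⟩
  calc c i ≤ ∑ j, c j := single_le_sum (fun j _ => hc0 j) (mem_univ i)
    _ = c ⬝ᵥ 1 := (dotProduct_one c).symm
    _ ≤ f 1 := hcf 1

namespace IsSymmetricNorm

variable {n : ℕ} {f : (Fin n → ℝ) → ℝ}

lemma nonneg (hf : IsSymmetricNorm n f) (x : Fin n → ℝ) : 0 ≤ f x := by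
  rcases eq_or_ne x 0 with rfl | hx
  · simpa using (hf.homog 0 0).ge
  · exact (hf.definite x hx).le

lemma zero_mem_antitoneDualBall (hf : IsSymmetricNorm n f) : 0 ∈ antitoneDualBall f :=
  ⟨antitone_const, le_rfl, fun y => by simpa using hf.nonneg y⟩

lemma abs_comp_perm_dotProduct_le (hf : IsSymmetricNorm n f) {c : Fin n → ℝ}
    (hc : ∀ y, c ⬝ᵥ y ≤ f y) (σ : Equiv.Perm (Fin n)) (y : Fin n → ℝ) :
    (fun i => |c (σ i)|) ⬝ᵥ y ≤ f y := by
  set ε : Fin n → ℝ := fun k => if 0 ≤ c k then 1 else -1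
  have hε : ∀ k, ε k = 1 ∨ ε k = -1 := fun k => by by_cases h : 0 ≤ c k <;> simp [ε, h]
  have habs : ∀ k, |c k| = c k * ε k := fun k => by
    by_cases h : 0 ≤ c k
    · simp [ε, h, abs_of_nonneg h]
    · simp [ε, h, abs_of_neg (not_le.1 h)]
  calc (fun i => |c (σ i)|) ⬝ᵥ y = c ⬝ᵥ fun k => ε k * y (σ.symm k) := by
        simp only [dotProduct, habs, mul_assoc]
        simpa using Equiv.sum_comp σ fun k => c k * (ε k * y (σ.symm k))
    _ ≤ f fun k => ε k * y (σ.symm k) := hc _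
    _ = f y := by rw [hf.sign_invariant ε hε, hf.perm_invariant]

theorem exists_mem_antitoneDualBall_eq (hf : IsSymmetricNorm n f) {x : Fin n → ℝ}
    (hx : Antitone x) (hx0 : 0 ≤ x) : ∃ d ∈ antitoneDualBall f, f x = d ⬝ᵥ x := by
  obtain ⟨c, hcx, hc⟩ := exists_dotProduct_eq_and_le f hf.triangle hf.homog x
  obtain ⟨σ, hσ⟩ := exists_antitone_comp_perm fun i => |c i|
  have hd : (fun i => |c (σ i)|) ∈ antitoneDualBall f :=
    ⟨hσ, fun i => abs_nonneg _, hf.abs_comp_perm_dotProduct_le hc σ⟩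
  refine ⟨_, hd, le_antisymm ?_ (hd.2.2 x)⟩
  calc f x = c ⬝ᵥ x := hcx.symm
    _ ≤ ∑ i, |c i| * x i :=
        sum_le_sum fun i _ => mul_le_mul_of_nonneg_right (le_abs_self _) (hx0 i)
    _ = ∑ i, |c (σ i)| * x (σ i) := (Equiv.sum_comp σ fun i => |c i| * x i).symm
    _ ≤ _ := (hσ.monovary hx).sum_mul_comp_perm_le_sum_mul

end IsSymmetricNorm

theorem stmt0_general (n : ℕ)
    (f : (Fin n → ℝ) → ℝ) (hf : IsSymmetricNorm n f) :
    ∃ S : Set (Fin n → ℝ), IsCompact S ∧ S.Nonempty ∧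
      (∀ c ∈ S, (∀ i j : Fin n, i ≤ j → c j ≤ c i) ∧ ∀ i, 0 ≤ c i) ∧
      ∀ A : H →L[ℂ] H,
        (∀ c ∈ S, ∑ j : Fin n, c j * sval (j.1 + 1) A ≤ normf n f A) ∧
        ∃ c ∈ S, normf n f A = ∑ j : Fin n, c j * sval (j.1 + 1) A :=
  ⟨antitoneDualBall f, isCompact_antitoneDualBall f, ⟨0, hf.zero_mem_antitoneDualBall⟩,
    fun _ hc => ⟨hc.1, hc.2.1⟩, fun A => ⟨fun _ hc => hc.2.2 _,
      hf.exists_mem_antitoneDualBall_eq (antitone_sval n A) fun _ => sval_nonneg _ A⟩⟩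

theorem stmt0 (n : ℕ) (hn : 0 < n) (hdim : (n : Cardinal) ≤ Module.rank ℂ H)
    (f : (Fin n → ℝ) → ℝ) (hf : IsSymmetricNorm n f) :
    ∃ S : Set (Fin n → ℝ), IsCompact S ∧ S.Nonempty ∧
      (∀ c ∈ S, (∀ i j : Fin n, i ≤ j → c j ≤ c i) ∧ ∀ i, 0 ≤ c i) ∧
      ∀ A : H →L[ℂ] H,
        (∀ c ∈ S, ∑ j : Fin n, c j * sval (j.1 + 1) A ≤ normf n f A) ∧
        ∃ c ∈ S, normf n f A = ∑ j : Fin n, c j * sval (j.1 + 1) A :=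
  stmt0_general n f hf
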